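/- If (X, Y) is a bi-R-diagonal pair, then all joint *-moments of odd order vanish: φ(a₁ ⋯ a_{2k+1}) = 0 for every k ≥ 0 and a₁,…,a_{2k+1} ∈ {X, X*, Y, Y*}. In particular, (X, Y) is *-bi-even. -/

import Mathlib

open scoped Classical

/-- Labels for left (`l`) and right (`r`) indices. -/
inductive Side : Type
  | l | r
deriving DecidableEq

variable {n k : ℕ}

/-- The list of indices of `{0, …, n-1}`: first the indices labelled `l` in increasing
order, then the indices labelled `r` in decreasing order. -/
def sListFn (χ : Fin n → Side) : List (Fin n) :=
  ((List.finRange n).filter fun i => decide (χ i = Side.l)) ++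
    (((List.finRange n).filter fun i => decide (χ i = Side.r)).reverse)

lemma sListFn_length (χ : Fin n → Side) : (sListFn χ).length = n := by
  have h : ∀ i ∈ List.finRange n,
      (decide (χ i = Side.r)) = (! decide (χ i = Side.l)) := by
    intro i _; cases hx : χ i <;> simp [hx]
  simp only [sListFn, List.length_append, List.length_reverse]
  rw [List.filter_congr h, ← List.length_append,
    (List.filter_append_perm _ _).length_eq, List.length_finRange]

lemma sListFn_nodup (χ : Fin n → Side) : (sListFn χ).Nodup := by
  refine List.Nodup.append ((List.nodup_finRange n).filter _)
    (List.nodup_reverse.mpr ((List.nodup_finRange n).filter _)) ?_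
  intro a ha hb
  rw [List.mem_reverse] at hb
  rw [List.mem_filter] at ha hb
  have h1 := of_decide_eq_true ha.2
  have h2 := of_decide_eq_true hb.2
  rw [h1] at h2; cases h2

/-- The underlying function of the permutation `s_χ`. -/
def sFun (χ : Fin n → Side) : Fin n → Fin n :=
  fun i => (sListFn χ).get (Fin.cast (sListFn_length χ).symm i)

lemma sFun_bijective (χ : Fin n → Side) : Function.Bijective (sFun χ) := by
  have hinj : Function.Injective (sFun χ) := by
    intro a b hab
    have h := List.nodup_iff_injective_get.mp (sListFn_nodup χ) hab
    exact Fin.ext (by simpa using congrArg Fin.val h)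
  exact Finite.injective_iff_bijective.mp hinj

/-- The permutation `s_χ` associated to a map `χ : {1,…,n} → {l,r}`. -/
noncomputable def sChi (χ : Fin n → Side) : Equiv.Perm (Fin n) :=
  Equiv.ofBijective (sFun χ) (sFun_bijective χ)

/-- The action of a permutation on a partition (viewed as a setoid):
`(σ · π)` relates `x, y` iff `π` relates `σ⁻¹ x, σ⁻¹ y`. -/
def applyPerm (σ : Equiv.Perm (Fin n)) (π : Setoid (Fin n)) : Setoid (Fin n) :=
  Setoid.comap σ.symm π

/-- A partition of `{1,…,k}` (as a setoid) is non-crossing. -/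
def IsNC (π : Setoid (Fin k)) : Prop :=
  ∀ a b c d : Fin k, a < b → b < c → c < d → π.r a c → π.r b d → π.r a b

/-- A partition is bi-non-crossing with respect to `χ` iff `s_χ⁻¹ · τ` is non-crossing. -/
def IsBNC (χ : Fin k → Side) (τ : Setoid (Fin k)) : Prop :=
  IsNC (Setoid.comap (sChi χ) τ)
/-- The ordered list of elements of the block of `c : Quotient τ`, in increasing order. -/
noncomputable def blockList (τ : Setoid (Fin k)) (c : Quotient τ) : List (Fin k) :=
  (List.finRange k).filter fun i => decide (Quotient.mk τ i = c)

/-- Restrict a function on `Fin k` along a list of indices. -/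
def restrictIdx {α : Type*} (l : List (Fin k)) (f : Fin k → α) : Fin l.length → α :=
  fun j => f (l.get j)

/-- A noncommutative `*`-probability space structure on a complex `*`-algebra `A`:
a unital, linear, positive functional. -/
structure NCPS (A : Type*) [Ring A] [Algebra ℂ A] [StarRing A] where
  φ : A → ℂ
  linear : IsLinearMap ℂ φ
  unital : φ 1 = 1
  pos : ∀ a : A, 0 ≤ (φ (star a * a)).re ∧ (φ (star a * a)).im = 0

variable {A : Type*} [Ring A] [Algebra ℂ A] [StarRing A]
variable {B : Type*} [Ring B] [Algebra ℂ B] [StarRing B]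

/-- `κ_{χ,τ}(a₁,…,a_k)`: the multiplicative extension of a family of bi-free cumulant
functionals `κ` over the blocks of the partition `τ` (each block read in increasing order,
with the induced `χ`). -/
noncomputable def biCumPart (κ : ∀ m : ℕ, (Fin m → Side) → (Fin m → A) → ℂ)
    (χ : Fin k → Side) (τ : Setoid (Fin k)) (a : Fin k → A) : ℂ :=
  ∏ᶠ c : Quotient τ,
    κ (blockList τ c).length (restrictIdx (blockList τ c) χ) (restrictIdx (blockList τ c) a)

/-- `κ` is the family of bi-free cumulant functionals of `φ`: the moment–cumulant
formula holds, summing over bi-non-crossing partitions. -/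
def IsBiFreeCumulant (φ : A → ℂ) (κ : ∀ m : ℕ, (Fin m → Side) → (Fin m → A) → ℂ) : Prop :=
  ∀ (k : ℕ) (χ : Fin k → Side) (a : Fin k → A),
    φ (List.ofFn a).prod = ∑ᶠ τ ∈ {τ : Setoid (Fin k) | IsBNC χ τ}, biCumPart κ χ τ a

/-- The multiplicative extension of a family of free cumulant functionals over the blocks
of a partition. -/
noncomputable def freeCumPart (κ : ∀ m : ℕ, (Fin m → B) → ℂ)
    (π : Setoid (Fin k)) (b : Fin k → B) : ℂ :=
  ∏ᶠ c : Quotient π, κ (blockList π c).length (restrictIdx (blockList π c) b)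

/-- `κ` is the family of free cumulant functionals of `ψ`: the moment–cumulant formula
holds, summing over non-crossing partitions. -/
def IsFreeCumulant (ψ : B → ℂ) (κ : ∀ m : ℕ, (Fin m → B) → ℂ) : Prop :=
  ∀ (k : ℕ) (b : Fin k → B),
    ψ (List.ofFn b).prod = ∑ᶠ π ∈ {π : Setoid (Fin k) | IsNC π}, freeCumPart κ π b

/-- The sequence with entries in `{X, X*}` at left indices and `{Y, Y*}` at right indices,
where `ε i = true` means the `i`-th entry is starred. -/
def pairSeq (X Y : A) (χ : Fin k → Side) (ε : Fin k → Bool) : Fin k → A := fun i =>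
  match χ i, ε i with
  | Side.l, false => X
  | Side.l, true => star X
  | Side.r, false => Y
  | Side.r, true => star Y

/-- A `Bool`-sequence is alternating. -/
def AltStars (g : Fin k → Bool) : Prop :=
  ∀ (i : ℕ) (h : i + 1 < k), g ⟨i + 1, h⟩ = !g ⟨i, Nat.lt_of_succ_lt h⟩

/-- The pair `(X, Y)` is bi-R-diagonal (with respect to the bi-free cumulants `κ`):
every bi-free cumulant with left entries in `{X, X*}` and right entries in `{Y, Y*}`
vanishes if it is of odd order or if its entries fail to alternate in `*`-terms and
non-`*`-terms when read in the `χ`-order. -/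
def IsBiRDiagonal (κ : ∀ m : ℕ, (Fin m → Side) → (Fin m → A) → ℂ) (X Y : A) : Prop :=
  ∀ (k : ℕ) (χ : Fin k → Side) (ε : Fin k → Bool),
    (Odd k ∨ ¬ AltStars fun i => ε (sChi χ i)) →
      κ k χ (pairSeq X Y χ ε) = 0

/-- The pairs `(X, Y)` and `(Z, W)` are `*`-bi-free: all mixed bi-free cumulants with
entries from `{X, X*} ∪ {Z, Z*}` at left indices and `{Y, Y*} ∪ {W, W*}` at right indices
vanish. -/
def StarBiFree (κ : ∀ m : ℕ, (Fin m → Side) → (Fin m → A) → ℂ) (X Y Z W : A) : Prop :=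
  ∀ (k : ℕ) (χ : Fin k → Side) (ω ε : Fin k → Bool),
    (∃ i j, ω i ≠ ω j) →
      κ k χ (fun i => if ω i then pairSeq Z W χ ε i else pairSeq X Y χ ε i) = 0

/-- `(u_l, u_r)` is a bi-Haar unitary pair with respect to `φ`: both unitaries, the
generated `*`-algebras commute, and `φ(u_lⁿ u_rᵐ) = δ_{n+m,0}` for all `n, m ∈ ℤ`. -/
structure IsBiHaar (φ : A → ℂ) (ul ur : A) : Prop where
  mul_star_l : ul * star ul = 1
  star_mul_l : star ul * ul = 1
  mul_star_r : ur * star ur = 1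
  star_mul_r : star ur * ur = 1
  comm : Commute ul ur
  comm_sl : Commute (star ul) ur
  comm_sr : Commute ul (star ur)
  comm_ss : Commute (star ul) (star ur)
  mom_pp : ∀ p q : ℕ, φ (ul ^ p * ur ^ q) = if p + q = 0 then 1 else 0
  mom_pm : ∀ p q : ℕ, φ (ul ^ p * (star ur) ^ q) = if p = q then 1 else 0
  mom_mp : ∀ p q : ℕ, φ ((star ul) ^ p * ur ^ q) = if p = q then 1 else 0
  mom_mm : ∀ p q : ℕ, φ ((star ul) ^ p * (star ur) ^ q) = if p + q = 0 then 1 else 0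

/-- `v` is a (free) Haar unitary with respect to `ψ`: `v` is a unitary and
`ψ(vⁿ) = 0` for all `n ∈ ℤ \ {0}`. -/
structure IsHaarUnitary (ψ : B → ℂ) (v : B) : Prop where
  mul_star : v * star v = 1
  star_mul : star v * v = 1
  mom_pos : ∀ m : ℕ, 0 < m → ψ (v ^ m) = 0
  mom_neg : ∀ m : ℕ, 0 < m → ψ ((star v) ^ m) = 0

/-! Expanding an odd moment by the moment–cumulant formula, every partition of the odd number
of points has a block of odd size, and the bi-free cumulant on that block vanishes by
bi-R-diagonality; so every term of the expansion is zero. -/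

lemma sum_length_blockList (τ : Setoid (Fin k)) :
    ∑ c : Quotient τ, (blockList τ c).length = k := by
  have hlen : ∀ c : Quotient τ,
      (blockList τ c).length = (Finset.univ.filter fun i => Quotient.mk τ i = c).card :=
    fun c => rfl
  simp only [hlen]
  rw [← Finset.card_eq_sum_card_fiberwise fun i _ => Finset.mem_univ (Quotient.mk τ i)]
  simp

lemma exists_odd_length_blockList (τ : Setoid (Fin k)) (hk : Odd k) :
    ∃ c : Quotient τ, Odd (blockList τ c).length := by
  by_contra! h
  simp only [Nat.not_odd_iff_even] at h
  have heven : Even k := sum_length_blockList τ ▸ Finset.even_sum _ fun c _ => h c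
  exact Nat.not_even_iff_odd.mpr hk heven

lemma biCumPart_eq_zero_of_block {A : Type*} {κ : ∀ m : ℕ, (Fin m → Side) → (Fin m → A) → ℂ}
    {χ : Fin k → Side} {τ : Setoid (Fin k)} {a : Fin k → A} (c : Quotient τ)
    (hc : κ (blockList τ c).length (restrictIdx (blockList τ c) χ)
      (restrictIdx (blockList τ c) a) = 0) :
    biCumPart κ χ τ a = 0 :=
  finprod_eq_zero _ c hc (Set.toFinite _)

lemma IsBiRDiagonal.biCumPart_pairSeq_eq_zero {A : Type*} [Ring A] [StarRing A]
    {κ : ∀ m : ℕ, (Fin m → Side) → (Fin m → A) → ℂ}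
    {X Y : A} (hXY : IsBiRDiagonal κ X Y) (hk : Odd k) (χ : Fin k → Side) (ε : Fin k → Bool)
    (τ : Setoid (Fin k)) :
    biCumPart κ χ τ (pairSeq X Y χ ε) = 0 := by
  obtain ⟨c, hc⟩ := exists_odd_length_blockList τ hk
  -- the block's entries are `pairSeq X Y` of the restricted `χ` and `ε`, definitionally
  exact biCumPart_eq_zero_of_block c (hXY _ _ _ (Or.inl hc))

/-- all odd joint `*`-moments of a bi-R-diagonal pair vanish; in particular
such a pair is `*`-bi-even. -/
theorem biRDiagonal_odd_moments_vanish {A : Type*} [Ring A] [Algebra ℂ A] [StarRing A]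
    (S : NCPS A) (κ : ∀ m : ℕ, (Fin m → Side) → (Fin m → A) → ℂ)
    (hκ : IsBiFreeCumulant S.φ κ) (X Y : A) (hXY : IsBiRDiagonal κ X Y) :
    ∀ (k : ℕ), Odd k → ∀ (χ : Fin k → Side) (ε : Fin k → Bool),
      S.φ (List.ofFn (pairSeq X Y χ ε)).prod = 0 := by
  intro k hk χ ε
  rw [hκ k χ (pairSeq X Y χ ε)]
  exact finsum_mem_of_eqOn_zero fun τ _ => hXY.biCumPart_pairSeq_eq_zero hk χ ε τ
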